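/- arXiv:math/0308211 — 4 statements merged into one kernel-verified Lean document; each statement's English description precedes it below -/
import Mathlib

section
/- Let $I_0 \subset \mathbb{R}$ be a compact interval, $f$ a Lebesgue-integrable function on $I_0$, and $A$ a real number with $\frac{1}{|I_0|}\int_{I_0} f(x)\,dx \le A$. Then there exists a finite or countable collection of pairwise disjoint subintervals $I_j \subset I_0$ such that $\frac{1}{|I_j|}\int_{I_j} f(x)\,dx = A$ for each $j$, and $f(x) \le A$ for almost every $x \in I_0 \setminus \bigcup_j I_j$. -/
/-!
Let `F x = ∫_a^x (f - A)`, so that `F a = 0 ≥ F b`. Shade the points of `(a, b)` that see, further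
right, a value of `F` above their own or above the level `F a`. The shadow is open, hence a
countable disjoint union of open intervals `(c, d)` whose endpoints are unshaded; the sunrise
picture forces `F c = F d`, i.e. `f` has mean `A` on `(c, d)`. Off the shadow `F` does not increase
to the right, so there its derivative, which is `f - A` almost everywhere by Lebesgue's
differentiation theorem, is `≤ 0`.
-/

open MeasureTheory Set Filter Topology

theorem Set.Countable.exists_injOn_image_eq {β : Type*} [Nonempty β] {S : Set β}
    (hS : S.Countable) : ∃ (I : ℕ → β) (N : Set ℕ), N.InjOn I ∧ I '' N = S := by
  have := hS.to_subtype
  obtain ⟨e, he⟩ := Countable.exists_injective_nat S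
  refine ⟨Function.extend e Subtype.val fun _ => Classical.arbitrary β, range e, ?_, ?_⟩
  · rintro _ ⟨s, rfl⟩ _ ⟨t, rfl⟩ hst
    rw [he.extend_apply, he.extend_apply] at hst
    rw [Subtype.ext hst]
  · rw [← range_comp, Function.extend_comp he, Subtype.range_coe]

section Components

variable {α : Type*} [ConditionallyCompleteLinearOrder α] [TopologicalSpace α] [OrderTopology α]
  [DenselyOrdered α] [LocallyConnectedSpace α] {U : Set α} {x : α}

theorem csInf_connectedComponentIn_notMem [NoMinOrder α] (hU : IsOpen U) (hb : BddBelow U)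
    (hx : x ∈ U) : sInf (connectedComponentIn U x) ∉ U := by
  set C := connectedComponentIn U x
  have hxC : x ∈ C := mem_connectedComponentIn hx
  have hCb : BddBelow C := hb.mono (connectedComponentIn_subset U x)
  intro hmem
  -- `C ∪ {sInf C}` is preconnected, so it lies in the component `C`; but `C` is open.
  have hinf : sInf C ∈ C :=
    (isPreconnected_connectedComponentIn.subset_closure (subset_insert _ _)
      (insert_subset (csInf_mem_closure ⟨x, hxC⟩ hCb) subset_closure)).subset_connectedComponentIn
      (mem_insert_of_mem _ hxC) (insert_subset hmem (connectedComponentIn_subset U x))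
      (mem_insert _ _)
  obtain ⟨y, hy, hyC⟩ := (hU.connectedComponentIn.eventually_mem hinf).exists_lt
  exact hy.not_ge (csInf_le hCb hyC)

theorem csSup_connectedComponentIn_notMem [NoMaxOrder α] (hU : IsOpen U) (hb : BddAbove U)
    (hx : x ∈ U) : sSup (connectedComponentIn U x) ∉ U :=
  have : LocallyConnectedSpace αᵒᵈ := ‹LocallyConnectedSpace α›
  csInf_connectedComponentIn_notMem (α := αᵒᵈ) hU hb hx

theorem connectedComponentIn_eq_Ioo [NoMinOrder α] [NoMaxOrder α] (hU : IsOpen U)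
    (hb : BddBelow U) (ha : BddAbove U) (hx : x ∈ U) :
    connectedComponentIn U x =
      Ioo (sInf (connectedComponentIn U x)) (sSup (connectedComponentIn U x)) := by
  set C := connectedComponentIn U x
  have hCU : C ⊆ U := connectedComponentIn_subset U x
  refine ((isConnected_connectedComponentIn_iff.2 hx).Ioo_csInf_csSup_subset (hb.mono hCU)
    (ha.mono hCU)).antisymm' fun y hy => ⟨?_, ?_⟩
  · exact (csInf_le (hb.mono hCU) hy).lt_of_ne fun h =>
      csInf_connectedComponentIn_notMem hU hb hx (h ▸ hCU hy)
  · exact (le_csSup (ha.mono hCU) hy).lt_of_ne fun h =>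
      csSup_connectedComponentIn_notMem hU ha hx (h.symm ▸ hCU hy)

theorem IsOpen.exists_pairwiseDisjoint_Ioo_biUnion_eq [TopologicalSpace.SeparableSpace α]
    [NoMinOrder α] [NoMaxOrder α] (hU : IsOpen U) (hb : BddBelow U) (ha : BddAbove U) :
    ∃ (c d : ℕ → α) (N : Set ℕ), (∀ j ∈ N, c j < d j ∧ c j ∉ U ∧ d j ∉ U) ∧
      N.PairwiseDisjoint (fun j => Ioo (c j) (d j)) ∧ ⋃ j ∈ N, Ioo (c j) (d j) = U := by
  set S := connectedComponentIn U '' U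
  have hdisj : S.PairwiseDisjoint id := by
    rintro _ ⟨x, -, rfl⟩ _ ⟨y, -, rfl⟩ hne
    refine disjoint_left.2 fun z hzx hzy => hne ?_
    rw [connectedComponentIn_eq hzx, connectedComponentIn_eq hzy]
  have hS : S.Countable := hdisj.countable_of_isOpen
    (by rintro _ ⟨x, -, rfl⟩; exact hU.connectedComponentIn)
    (by rintro _ ⟨x, hx, rfl⟩; exact ⟨x, mem_connectedComponentIn hx⟩)
  obtain ⟨I, N, hinj, hIN⟩ := hS.exists_injOn_image_eq
  have hIS : ∀ j ∈ N, I j ∈ S := fun j hj => hIN ▸ mem_image_of_mem I hj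
  have hIoo : ∀ j ∈ N, Ioo (sInf (I j)) (sSup (I j)) = I j := by
    intro j hj
    obtain ⟨x, hx, hxj⟩ := hIS j hj
    rw [← hxj, ← connectedComponentIn_eq_Ioo hU hb ha hx]
  refine ⟨fun j => sInf (I j), fun j => sSup (I j), N, fun j hj => ?_, fun i hi j hj hij => ?_, ?_⟩
  · obtain ⟨x, hx, hxj⟩ := hIS j hj
    have hxI := (connectedComponentIn_eq_Ioo hU hb ha hx).subset (mem_connectedComponentIn hx)
    simp only [← hxj]
    exact ⟨hxI.1.trans hxI.2, csInf_connectedComponentIn_notMem hU hb hx,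
      csSup_connectedComponentIn_notMem hU ha hx⟩
  · simp only [Function.onFun, hIoo i hi, hIoo j hj]
    exact hdisj (hIS i hi) (hIS j hj) fun h => hij (hinj hi hj h)
  · rw [iUnion₂_congr hIoo, ← sUnion_image, hIN, sUnion_image]
    exact subset_antisymm (iUnion₂_subset fun x _ => connectedComponentIn_subset U x)
      fun x hx => mem_biUnion hx (mem_connectedComponentIn hx)

end Components

theorem HasDerivWithinAt.nonpos_of_eventually_le {f : ℝ → ℝ} {f' x : ℝ}
    (hf : HasDerivWithinAt f f' (Ioi x) x) (h : ∀ᶠ y in 𝓝[>] x, f y ≤ f x) : f' ≤ 0 := by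
  have hslope : Tendsto (slope f x) (𝓝[>] x) (𝓝 f') :=
    (hasDerivWithinAt_iff_tendsto_slope' (lt_irrefl x)).1 hf
  refine le_of_tendsto hslope ?_
  filter_upwards [h, self_mem_nhdsWithin] with y hFy hxy
  rw [slope_def_field]
  exact div_nonpos_of_nonpos_of_nonneg (sub_nonpos.2 hFy) (sub_nonneg.2 (le_of_lt hxy))

namespace RisingSun

/-- Comparing with `min (F x) (F a)` rather than with `F x` alone (the classical shadow) makes the
component abutting `a` balanced too. -/
def shadow (F : ℝ → ℝ) (a b : ℝ) : Set ℝ :=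
  {x | x ∈ Ioo a b ∧ ∃ y ∈ Ioc x b, min (F x) (F a) < F y}

variable {F : ℝ → ℝ} {a b c d x y : ℝ}

theorem shadow_subset_Ioo : shadow F a b ⊆ Ioo a b := fun _ hx => hx.1

theorem isOpen_shadow (hF : Continuous F) : IsOpen (shadow F a b) := by
  refine isOpen_iff_mem_nhds.2 fun x ⟨hx, y, hy, hFy⟩ => ?_
  filter_upwards [isOpen_Ioo.mem_nhds hx, Iio_mem_nhds hy.1,
    (hF.min continuous_const).continuousAt.eventually_lt continuousAt_const hFy] with z hz hzy hFz
  exact ⟨hz, y, ⟨hzy, hy.2⟩, hFz⟩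

theorem le_min_of_notMem_shadow (hx : a < x) (hxU : x ∉ shadow F a b) (hy : y ∈ Ioc x b) :
    F y ≤ min (F x) (F a) :=
  not_lt.1 fun h => hxU ⟨⟨hx, hy.1.trans_le hy.2⟩, y, hy, h⟩

theorem le_of_notMem_shadow (hF : Continuous F) (hFb : F b ≤ F a) (hx : x ∈ Ioc a b)
    (hxU : x ∉ shadow F a b) : F x ≤ F a := by
  rcases hx.2.lt_or_eq with hxb | rfl
  · refine le_of_tendsto (hF.continuousWithinAt (s := Ioi x)) ?_
    filter_upwards [Ioc_mem_nhdsGT hxb] with y hy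
    exact (le_min_of_notMem_shadow hx.1 hxU hy).trans (min_le_right _ _)
  · exact hFb

/-- Take the last point `z ∈ [x, d]` with `F z ≥ min (F x) (F a)`. If `z < d`, the point `y` that
shades `z` cannot lie in `(z, d]`, so `y > d`, and then `F d ≥ F y` because `d` is unshaded. -/
theorem min_le_of_Ico_subset_shadow (hF : Continuous F) (hxd : x < d)
    (hsub : Ico x d ⊆ shadow F a b) (hd : d ∉ shadow F a b) : min (F x) (F a) ≤ F d := by
  set m := min (F x) (F a)
  have had : a < d := (shadow_subset_Ioo (hsub ⟨le_rfl, hxd⟩)).1.trans hxd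
  set T := Icc x d ∩ F ⁻¹' Ici m
  have hT : IsCompact T := isCompact_Icc.inter_right (isClosed_Ici.preimage hF)
  obtain ⟨⟨hxz, hzd⟩, hmz⟩ := hT.sSup_mem ⟨x, ⟨le_rfl, hxd.le⟩, show m ≤ F x from min_le_left _ _⟩
  rcases hzd.lt_or_eq with hzd | hzd
  · obtain ⟨-, y, hy, hFy⟩ := hsub ⟨hxz, hzd⟩
    have hmy : m < F y := (le_min hmz (min_le_right _ _)).trans_lt hFy
    rcases le_or_gt y d with hyd | hyd
    · exact absurd (le_csSup hT.bddAbove ⟨⟨hxz.trans hy.1.le, hyd⟩, hmy.le⟩) hy.1.not_ge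
    · exact hmy.le.trans ((le_min_of_notMem_shadow had hd ⟨hyd, hy.2⟩).trans (min_le_left _ _))
  · exact hzd ▸ hmz

theorem apply_eq_of_Ioo_subset_shadow (hF : Continuous F) (hFb : F b ≤ F a) (hac : a ≤ c)
    (hcd : c < d) (hdb : d ≤ b) (hsub : Ioo c d ⊆ shadow F a b) (hc : c ∉ shadow F a b)
    (hd : d ∉ shadow F a b) : F c = F d := by
  have hFd : F d ≤ F a := le_of_notMem_shadow hF hFb ⟨hac.trans_lt hcd, hdb⟩ hd
  have hcle : min (F c) (F a) ≤ F d := by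
    refine le_of_tendsto ((hF.min continuous_const).continuousWithinAt (s := Ioi c)) ?_
    filter_upwards [Ioo_mem_nhdsGT hcd] with y hy
    exact min_le_of_Ico_subset_shadow hF hy.2 (fun z hz => hsub ⟨hy.1.trans_le hz.1, hz.2⟩) hd
  rcases hac.eq_or_lt with rfl | hac
  · rw [min_self] at hcle
    exact le_antisymm hcle hFd
  · have hFc : F c ≤ F a := le_of_notMem_shadow hF hFb ⟨hac, hcd.le.trans hdb⟩ hc
    rw [min_eq_left hFc] at hcle
    exact le_antisymm hcle
      ((le_min_of_notMem_shadow hac hc ⟨hcd, hdb⟩).trans (min_le_left _ _))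

theorem ae_nonpos_of_notMem_shadow {G : ℝ → ℝ} (hG : LocallyIntegrable G) (a b : ℝ) :
    ∀ᵐ x, x ∈ Ioo a b → x ∉ shadow (fun x => ∫ t in a..x, G t) a b → G x ≤ 0 := by
  filter_upwards [LocallyIntegrable.ae_hasDerivAt_integral hG] with x hderiv hx hxU
  refine (hderiv a).hasDerivWithinAt.nonpos_of_eventually_le ?_
  filter_upwards [Ioc_mem_nhdsGT hx.2] with y hy
  exact (le_min_of_notMem_shadow hx.1 hxU hy).trans (min_le_left _ _)

end RisingSun

open RisingSun in
theorem exists_pairwiseDisjoint_Ico_intervalIntegral_eq_zero {g : ℝ → ℝ} {a b : ℝ} (hab : a ≤ b)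
    (hg : IntegrableOn g (Icc a b)) (hgab : ∫ x in a..b, g x ≤ 0) :
    ∃ (c d : ℕ → ℝ) (N : Set ℕ),
      (∀ j ∈ N, a ≤ c j ∧ c j < d j ∧ d j ≤ b) ∧
      (N.PairwiseDisjoint fun j => Ico (c j) (d j)) ∧
      (∀ j ∈ N, ∫ x in c j..d j, g x = 0) ∧
      (∀ᵐ x, x ∈ Icc a b \ ⋃ j ∈ N, Ico (c j) (d j) → g x ≤ 0) := by
  set G := (Icc a b).indicator g
  have hG : Integrable G := (integrable_indicator_iff measurableSet_Icc).2 hg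
  set F := fun x => ∫ t in a..x, G t
  have hF : Continuous F :=
    intervalIntegral.continuous_primitive (fun _ _ => hG.intervalIntegrable) a
  have hFsub (c d : ℝ) : F d - F c = ∫ x in c..d, G x :=
    intervalIntegral.integral_interval_sub_left hG.intervalIntegrable hG.intervalIntegrable
  have hGg {c d : ℝ} (hac : a ≤ c) (hcd : c ≤ d) (hdb : d ≤ b) :
      ∫ x in c..d, G x = ∫ x in c..d, g x :=
    intervalIntegral.integral_congr fun x hx =>
      indicator_of_mem (Icc_subset_Icc hac hdb (uIcc_of_le hcd ▸ hx)) g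
  have hFb : F b ≤ F a := by
    rw [← sub_nonpos, hFsub, hGg le_rfl hab le_rfl]
    exact hgab
  obtain ⟨c, d, N, hN, hdisj, hU⟩ := (isOpen_shadow hF).exists_pairwiseDisjoint_Ioo_biUnion_eq
    (bddBelow_Ioo.mono shadow_subset_Ioo) (bddAbove_Ioo.mono shadow_subset_Ioo)
  have hsub : ∀ j ∈ N, Ioo (c j) (d j) ⊆ shadow F a b := fun j hj =>
    hU ▸ subset_biUnion_of_mem (u := fun j => Ioo (c j) (d j)) hj
  have hcd : ∀ j ∈ N, a ≤ c j ∧ c j < d j ∧ d j ≤ b := fun j hj =>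
    have hends := (Ioo_subset_Ioo_iff (hN j hj).1).1 ((hsub j hj).trans shadow_subset_Ioo)
    ⟨hends.1, (hN j hj).1, hends.2⟩
  refine ⟨c, d, N, hcd,
    fun i hi j hj hij => Ico_disjoint_Ico.2 (Ioo_disjoint_Ioo.1 (hdisj hi hj hij)),
    fun j hj => ?_, ?_⟩
  · obtain ⟨hac, hcdj, hdb⟩ := hcd j hj
    rw [← hGg hac hcdj.le hdb, ← hFsub, sub_eq_zero]
    exact (apply_eq_of_Ioo_subset_shadow hF hFb hac hcdj hdb (hsub j hj) (hN j hj).2.1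
      (hN j hj).2.2).symm
  · filter_upwards [ae_nonpos_of_notMem_shadow hG.locallyIntegrable a b,
      (Ioo_ae_eq_Icc : Ioo a b =ᵐ[volume] Icc a b)] with x hnonpos hIoo ⟨hx, hxU⟩
    have hx : x ∈ Ioo a b := hIoo.mpr hx
    have hGx : G x ≤ 0 := hnonpos hx fun h =>
      hxU (biUnion_mono subset_rfl (fun j _ => Ioo_subset_Ico_self) (hU ▸ h))
    rwa [show G x = g x from indicator_of_mem (Ioo_subset_Icc_self hx) g] at hGx

theorem intervalIntegral_sub_const_eq_mul_setAverage {f : ℝ → ℝ} {c d A : ℝ} {s : Set ℝ}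
    (hcd : c < d) (hs : s =ᵐ[volume] Ioc c d) (hf : IntervalIntegrable f volume c d) :
    ∫ x in c..d, (f x - A) = (d - c) * ((⨍ x in s, f x) - A) := by
  have havg : ⨍ x in Ioc c d, f x = (d - c)⁻¹ * ∫ x in c..d, f x := by
    rw [← uIoc_of_le hcd.le, interval_average_eq, smul_eq_mul]
  rw [setAverage_congr hs, havg, intervalIntegral.integral_sub hf intervalIntegrable_const,
    intervalIntegral.integral_const, smul_eq_mul]
  field_simp [(sub_pos.2 hcd).ne']

/-- F. Riesz's "rising sun" lemma on a compact interval `[a, b]` with Lebesgue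
measure: if the mean value of `f` over `[a, b]` is at most `A`, then there is a
finite or countable family of pairwise disjoint subintervals on each of which the
mean value of `f` equals `A`, and `f ≤ A` almost everywhere off their union. -/
theorem riesz_rising_sun_lemma (a b : ℝ) (hab : a < b) (f : ℝ → ℝ)
    (hf : IntegrableOn f (Icc a b)) (A : ℝ)
    (hA : ⨍ x in Icc a b, f x ≤ A) :
    ∃ (c d : ℕ → ℝ) (N : Set ℕ),
      (∀ j ∈ N, a ≤ c j ∧ c j < d j ∧ d j ≤ b) ∧
      (N.PairwiseDisjoint fun j => Ico (c j) (d j)) ∧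
      (∀ j ∈ N, ⨍ x in Ico (c j) (d j), f x = A) ∧
      (∀ᵐ x, x ∈ Icc a b \ ⋃ j ∈ N, Ico (c j) (d j) → f x ≤ A) := by
  have hf_int {c d : ℝ} (hac : a ≤ c) (hdb : d ≤ b) (hcd : c ≤ d) :
      IntervalIntegrable f volume c d :=
    (hf.mono_set (uIcc_of_le hcd ▸ Icc_subset_Icc hac hdb)).intervalIntegrable
  have hmean : ∫ x in a..b, (f x - A) ≤ 0 := by
    rw [intervalIntegral_sub_const_eq_mul_setAverage hab Ioc_ae_eq_Icc.symm
      (hf_int le_rfl le_rfl hab.le)]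
    exact mul_nonpos_of_nonneg_of_nonpos (sub_nonneg.2 hab.le) (sub_nonpos.2 hA)
  obtain ⟨c, d, N, hcd, hdisj, hzero, hae⟩ := exists_pairwiseDisjoint_Ico_intervalIntegral_eq_zero
    (g := fun x => f x - A) hab.le (hf.sub (integrableOn_const measure_Icc_lt_top.ne)) hmean
  refine ⟨c, d, N, hcd, hdisj, fun j hj => ?_, hae.mono fun x hx hmem => sub_nonpos.1 (hx hmem)⟩
  obtain ⟨hac, hcdj, hdb⟩ := hcd j hj
  have hj0 := hzero j hj
  rw [intervalIntegral_sub_const_eq_mul_setAverage hcdj Ico_ae_eq_Ioc (hf_int hac hdb hcdj.le)]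
    at hj0
  exact sub_eq_zero.1 ((mul_eq_zero.1 hj0).resolve_left (sub_ne_zero.2 hcdj.ne'))
end

section
/- Let $I_0$ be a rectangle (a product of intervals) in $\mathbb{R}^n$, let $\mu$ be a finite Borel measure on $I_0$ that is absolutely continuous with respect to Lebesgue measure, let $f \in L^1(\mu)$, and let $A$ satisfy $\frac{1}{\mu(I_0)}\int_{I_0} f\,d\mu \le A$. Then there exists a finite or countable collection of pairwise disjoint rectangles $I_j \subset I_0$ with $\frac{1}{\mu(I_j)}\int_{I_j} f\,d\mu = A$ for each $j$, and $f(x) \le A$ for $\mu$-almost every $x \in I_0 \setminus \bigcup_j I_j$. -/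
/-!
Put `g = f - A`, so that `∫_{I₀} g ≤ 0`, and cut boxes recursively by hyperplanes whose directions
cycle through the axes. A box `R` with `μ R ≠ 0` and `∫_R g < 0` is cut into two boxes with
`∫ g ≤ 0`: hyperplanes are `μ`-null, so the integral below the cut depends continuously on its
position, and the intermediate value theorem gives a cut after which each piece has `∫ g = 0` or
is at most `2/3` as wide as `R` in the cut direction. The selected rectangles are the boxes of
positive measure and zero integral all of whose ancestors have negative integral.

Almost every other point `x` of `I₀` lies only in boxes of positive measure and negative integral,
and these shrink to `x`. Averages over the boxes of a binary partition tree converge almost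
everywhere (a maximal inequality over the disjoint topmost boxes, and density of continuous
functions in `L¹`), so `g x` is a limit of nonpositive averages.
-/

open MeasureTheory Set

def rect {n : ℕ} (a b : Fin n → ℝ) : Set (Fin n → ℝ) :=
  Set.pi Set.univ fun i => Set.Ico (a i) (b i)

open Function Filter Topology
open scoped ENNReal

theorem List.exists_minimal_isSuffix {β : Type*} (P : List β → Prop) {l : List β}
    (hl : P l) : ∃ l₀, l₀ <:+ l ∧ P l₀ ∧ ∀ l', l' <:+ l₀ → P l' → l' = l₀ := by
  by_cases hmin : ∀ l', l' <:+ l → P l' → l' = l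
  · exact ⟨l, List.suffix_refl l, hl, hmin⟩
  push Not at hmin
  obtain ⟨l', hsuf, hP, hne⟩ := hmin
  have : l'.length < l.length :=
    hsuf.length_le.lt_of_ne fun h => hne (hsuf.eq_of_length h)
  obtain ⟨l₀, hsuf₀, hP₀, hmin₀⟩ := List.exists_minimal_isSuffix P hP
  exact ⟨l₀, hsuf₀.trans hsuf, hP₀, hmin₀⟩
termination_by l.length

section Average

variable {α E : Type*} [MeasurableSpace α] {μ : Measure α} [NormedAddCommGroup E]
  [NormedSpace ℝ E]

theorem ae_forall_mem_imp_measure_ne_zero {ι : Type*} [Countable ι] (s : ι → Set α) :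
    ∀ᵐ x ∂μ, ∀ i, x ∈ s i → μ (s i) ≠ 0 := by
  refine ae_all_iff.2 fun i => ?_
  by_cases h : μ (s i) = 0
  · filter_upwards [measure_eq_zero_iff_ae_notMem.1 h] with x hx hxs using absurd hxs hx
  · exact Eventually.of_forall fun _ _ => h

variable [IsFiniteMeasure μ]

theorem tendsto_setAverage_of_continuousAt [TopologicalSpace α] [CompleteSpace E] {ι : Type*}
    {l : Filter ι} {s : ι → Set α} {x : α} {φ : α → E} (hs : Tendsto s l (𝓝 x).smallSets)
    (hsm : ∀ i, MeasurableSet (s i)) (hμs : ∀ i, μ (s i) ≠ 0) (hφ : ContinuousAt φ x)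
    (hφi : Integrable φ μ) : Tendsto (fun i => ⨍ y in s i, φ y ∂μ) l (𝓝 (φ x)) := by
  refine Metric.nhds_basis_closedBall.tendsto_right_iff.2 fun ε hε => ?_
  filter_upwards [tendsto_smallSets_iff.1 hs _ (hφ (Metric.closedBall_mem_nhds _ hε))] with i hi
  exact (convex_closedBall _ _).set_average_mem Metric.isClosed_closedBall (hμs i)
    (measure_ne_top _ _) (ae_restrict_of_forall_mem (hsm i) hi) hφi.integrableOn

theorem norm_setAverage_le_of_setLIntegral_le {s : Set α} {ψ : α → E} {ε : ℝ} (hε : 0 ≤ ε)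
    (h : ∫⁻ y in s, ‖ψ y‖ₑ ∂μ ≤ ENNReal.ofReal ε * μ s) : ‖⨍ y in s, ψ y ∂μ‖ ≤ ε := by
  rcases eq_or_ne (μ s) 0 with h0 | h0
  · simp [setAverage_eq, measureReal_def, h0, hε]
  have hpos : 0 < μ.real s := ENNReal.toReal_pos h0 (measure_ne_top _ _)
  rw [setAverage_eq, norm_smul, norm_inv, Real.norm_of_nonneg hpos.le, inv_mul_le_iff₀ hpos]
  calc ‖∫ y in s, ψ y ∂μ‖ = ‖∫ y in s, ψ y ∂μ‖ₑ.toReal := by simp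
    _ ≤ (ENNReal.ofReal ε * μ s).toReal :=
        ENNReal.toReal_mono (by finiteness) ((enorm_integral_le_lintegral_enorm _).trans h)
    _ = μ.real s * ε := by rw [ENNReal.toReal_mul, ENNReal.toReal_ofReal hε, mul_comm]; rfl

theorem setIntegral_sub_const_eq {s : Set α} {f : α → ℝ} (hf : IntegrableOn f s μ) (A : ℝ) :
    ∫ x in s, (f x - A) ∂μ = μ.real s * (⨍ x in s, f x ∂μ - A) := by
  rw [integral_sub hf (integrableOn_const (measure_ne_top _ _)), setIntegral_const, mul_sub,
    ← smul_eq_mul, measure_smul_setAverage _ (measure_ne_top _ _), smul_eq_mul]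

theorem ae_le_of_setAverage_le_of_subsingleton [Subsingleton α] {s : Set α} {f : α → ℝ} {A : ℝ}
    (hA : ⨍ x in s, f x ∂μ ≤ A) : ∀ᵐ x ∂μ, x ∈ s → f x ≤ A := by
  rcases eq_or_ne (μ s) 0 with h0 | h0
  · filter_upwards [measure_eq_zero_iff_ae_notMem.1 h0] with x hx hxs using absurd hxs hx
  refine Eventually.of_forall fun x _ => ?_
  have : f = fun _ => f x := funext fun y => congrArg f (Subsingleton.elim y x)
  rwa [this, setAverage_const h0 (measure_ne_top _ _)] at hA

end Average

theorem tendsto_zero_of_antitone_of_frequently_le_mul {s : ℕ → ℝ} {c : ℝ} (hc : c < 1)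
    (h0 : ∀ k, 0 ≤ s k) (hs : Antitone s) (hfreq : ∃ᶠ k in atTop, s (k + 1) ≤ c * s k) :
    Tendsto s atTop (𝓝 0) := by
  have hbdd : BddBelow (range s) := ⟨0, forall_mem_range.2 h0⟩
  have hlim := tendsto_atTop_ciInf hs hbdd
  suffices ⨅ k, s k ≤ 0 by rwa [le_antisymm this (le_ciInf h0)] at hlim
  by_contra! hL
  have hc' : c * ⨅ k, s k < ⨅ k, s k := by nlinarith
  obtain ⟨k, hk, hk'⟩ := (hfreq.and_eventually ((hlim.const_mul c).eventually_lt_const hc')).exists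
  exact (ciInf_le hbdd (k + 1)).not_gt (hk.trans_lt hk')

/-- Used with `F p` the integral of `g` over the part of a box below the cut at `p`, so that
`F b - F p` is the integral over the part above it. -/
theorem exists_cut_of_continuousOn {F : ℝ → ℝ} {a b : ℝ} (hab : a ≤ b)
    (hF : ContinuousOn F (Icc a b)) (ha : F a = 0) (hb : F b ≤ 0) :
    ∃ p ∈ Icc a b, F b ≤ F p ∧ F p ≤ 0 ∧
      (F p = 0 ∨ p - a ≤ 2 / 3 * (b - a)) ∧ (F p = F b ∨ b - p ≤ 2 / 3 * (b - a)) := by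
  set p₁ := a + (b - a) / 3 with hp₁
  set p₂ := a + 2 / 3 * (b - a) with hp₂
  clear_value p₁ p₂
  have h₁ : a ≤ p₁ := by linarith
  have h₁₂ : p₁ ≤ p₂ := by linarith
  have h₂ : p₂ ≤ b := by linarith
  rcases lt_or_ge 0 (F p₂) with hF₂ | hF₂
  · obtain ⟨p, hp, hFp⟩ := intermediate_value_Icc' h₂
      (hF.mono (Icc_subset_Icc (h₁.trans h₁₂) le_rfl)) ⟨hb, hF₂.le⟩
    exact ⟨p, ⟨h₁.trans (h₁₂.trans hp.1), hp.2⟩, hFp ▸ hb, hFp.le, Or.inl hFp,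
      Or.inr (by linarith [hp.1])⟩
  rcases lt_or_ge (F p₁) (F b) with hF₁ | hF₁
  · obtain ⟨p, hp, hFp⟩ := intermediate_value_Icc' h₁
      (hF.mono (Icc_subset_Icc le_rfl (h₁₂.trans h₂))) ⟨hF₁.le, ha ▸ hb⟩
    exact ⟨p, ⟨hp.1, hp.2.trans (h₁₂.trans h₂)⟩, hFp.ge, hFp ▸ hb,
      Or.inr (by linarith [hp.2]), Or.inl hFp⟩
  rcases le_or_gt (F b) (F p₂) with hF₂' | hF₂'
  · exact ⟨p₂, ⟨h₁.trans h₁₂, h₂⟩, hF₂', hF₂, Or.inr (by linarith), Or.inr (by linarith)⟩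
  · obtain ⟨p, hp, hFp⟩ := intermediate_value_Icc' h₁₂
      (hF.mono (Icc_subset_Icc h₁ h₂)) ⟨hF₂'.le, hF₁⟩
    exact ⟨p, ⟨h₁.trans hp.1, hp.2.trans h₂⟩, hFp.ge, hFp ▸ hb,
      Or.inr (by linarith [hp.2]), Or.inl hFp⟩

theorem continuous_setIntegral_setOf_lt {α E : Type*} [MeasurableSpace α] [NormedAddCommGroup E]
    [NormedSpace ℝ E] {ν : Measure α} {φ : α → ℝ} (hφ : Measurable φ)
    (hν : ∀ c, ν {x | φ x = c} = 0) {g : α → E} (hg : Integrable g ν) :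
    Continuous fun p => ∫ x in {x | φ x < p}, g x ∂ν := by
  have hmeas : ∀ p, MeasurableSet {x | φ x < p} := fun p => measurableSet_lt hφ measurable_const
  refine continuous_iff_continuousAt.2 fun p₀ => ?_
  simp_rw [← integral_indicator (hmeas _)]
  refine continuousAt_of_dominated (bound := fun x => ‖g x‖)
    (Eventually.of_forall fun p => hg.aestronglyMeasurable.indicator (hmeas p))
    (Eventually.of_forall fun p => Eventually.of_forall fun x => norm_indicator_le_norm_self g x)
    hg.norm ?_
  filter_upwards [measure_eq_zero_iff_ae_notMem.1 (hν p₀)] with x hx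
  rcases lt_or_gt_of_ne (hx : φ x ≠ p₀) with h | h
  · refine continuousAt_const.congr (f := fun _ => g x) ?_
    filter_upwards [lt_mem_nhds h] with p hp
    simp [indicator, hp]
  · refine continuousAt_const.congr (f := fun _ => 0) ?_
    filter_upwards [gt_mem_nhds h] with p hp
    simp [indicator, hp.not_gt]

structure PartitionTree (α : Type*) where
  node : List Bool → Set α
  node_false_union_node_true : ∀ l, node (false :: l) ∪ node (true :: l) = node l
  disjoint_node_false_node_true : ∀ l, Disjoint (node (false :: l)) (node (true :: l))

namespace PartitionTree

section

variable {α : Type*} (T : PartitionTree α)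

theorem node_cons_subset (b : Bool) (l : List Bool) : T.node (b :: l) ⊆ T.node l := by
  rw [← T.node_false_union_node_true l]
  cases b
  · exact subset_union_left
  · exact subset_union_right

theorem node_subset_of_isSuffix {l₁ l₂ : List Bool} (h : l₁ <:+ l₂) : T.node l₂ ⊆ T.node l₁ := by
  obtain ⟨l, rfl⟩ := h
  induction l with
  | nil => exact subset_rfl
  | cons b l ih => exact (T.node_cons_subset b _).trans ih

open Classical in
/-- The address of the depth-`k` node containing `x`, provided `x ∈ T.node []`. -/
noncomputable def path (x : α) : ℕ → List Bool
  | 0 => []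
  | k + 1 => decide (x ∉ T.node (false :: path x k)) :: path x k

theorem path_succ (x : α) (k : ℕ) : ∃ b, T.path x (k + 1) = b :: T.path x k := ⟨_, rfl⟩

@[simp]
theorem length_path (x : α) (k : ℕ) : (T.path x k).length = k := by
  induction k with
  | zero => rfl
  | succ k ih => simp [path, ih]

theorem mem_node_path {x : α} (hx : x ∈ T.node []) (k : ℕ) : x ∈ T.node (T.path x k) := by
  induction k with
  | zero => exact hx
  | succ k ih =>
    rw [← T.node_false_union_node_true] at ih
    by_cases h : x ∈ T.node (false :: T.path x k) <;> simp_all [path]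

theorem eq_path_of_mem_node {x : α} : ∀ {l : List Bool}, x ∈ T.node l → l = T.path x l.length
  | [], _ => rfl
  | b :: l, hx => by
    have hl := eq_path_of_mem_node (T.node_cons_subset b l hx)
    rw [List.length_cons, path, ← hl]
    cases b
    · simpa using hx
    · simpa using (T.disjoint_node_false_node_true l).notMem_of_mem_right hx

theorem path_isSuffix_path (x : α) {k k' : ℕ} (h : k ≤ k') : T.path x k <:+ T.path x k' := by
  induction h with
  | refl => exact List.suffix_refl _
  | step _ ih => exact ih.trans (by rw [path]; exact List.suffix_cons _ _)

theorem disjoint_node_of_not_isSuffix {l₁ l₂ : List Bool} (h₁ : ¬ l₁ <:+ l₂) (h₂ : ¬ l₂ <:+ l₁) :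
    Disjoint (T.node l₁) (T.node l₂) := by
  refine Set.disjoint_left.2 fun x hx₁ hx₂ => ?_
  rw [T.eq_path_of_mem_node hx₁, T.eq_path_of_mem_node hx₂] at h₁ h₂
  rcases le_total l₁.length l₂.length with h | h
  · exact h₁ (T.path_isSuffix_path x h)
  · exact h₂ (T.path_isSuffix_path x h)

variable [MeasurableSpace α]

/-- The topmost nodes with `c * μ (T.node l) < ∫⁻ x in T.node l, f x ∂μ` are pairwise disjoint
and have the same union as all such nodes. -/
theorem mul_measure_biUnion_le_lintegral (hT : ∀ l, MeasurableSet (T.node l)) (μ : Measure α)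
    (f : α → ℝ≥0∞) (c : ℝ≥0∞) :
    c * μ (⋃ l ∈ {l | c * μ (T.node l) < ∫⁻ x in T.node l, f x ∂μ}, T.node l) ≤
      ∫⁻ x, f x ∂μ := by
  set P : List Bool → Prop := fun l => c * μ (T.node l) < ∫⁻ x in T.node l, f x ∂μ
  set M := {l | P l ∧ ∀ l', l' <:+ l → P l' → l' = l}
  have hcover : ⋃ l ∈ {l | P l}, T.node l = ⋃ l ∈ M, T.node l := by
    refine subset_antisymm (iUnion₂_subset fun l hl => ?_)
      (biUnion_subset_biUnion_left fun l hl => hl.1)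
    obtain ⟨l₀, hsuf, hP, hmin⟩ := List.exists_minimal_isSuffix P hl
    exact (T.node_subset_of_isSuffix hsuf).trans (subset_biUnion_of_mem (u := T.node) ⟨hP, hmin⟩)
  have hdisj : M.PairwiseDisjoint T.node := fun l₁ h₁ l₂ h₂ hne =>
    T.disjoint_node_of_not_isSuffix (fun h => hne (h₂.2 _ h h₁.1))
      (fun h => hne (h₁.2 _ h h₂.1).symm)
  calc c * μ (⋃ l ∈ {l | P l}, T.node l) = ∑' l : M, c * μ (T.node l) := by
        rw [hcover, measure_biUnion M.to_countable hdisj (fun l _ => hT l), ENNReal.tsum_mul_left]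
    _ ≤ ∑' l : M, ∫⁻ x in T.node l, f x ∂μ := ENNReal.tsum_le_tsum fun l => l.2.1.le
    _ = ∫⁻ x in ⋃ l ∈ M, T.node l, f x ∂μ :=
        (lintegral_biUnion M.to_countable (fun l _ => hT l) hdisj f).symm
    _ ≤ ∫⁻ x, f x ∂μ := setLIntegral_le_lintegral _ _

end

variable {α E : Type*} [PseudoMetricSpace α] [MeasurableSpace α]
  {μ : Measure α} [IsFiniteMeasure μ] [NormedAddCommGroup E] [NormedSpace ℝ E] [CompleteSpace E]
  (T : PartitionTree α) {g : α → E}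

theorem exists_node_lt_setLIntegral_or_le_enorm (hT : ∀ l, MeasurableSet (T.node l))
    (hg : Integrable g μ) {φ : α → E} (hφ : Continuous φ) (hφi : Integrable φ μ) {ε : ℝ}
    (hε : 0 < ε) {x : α} (hx : x ∈ T.node []) (hμx : ∀ k, μ (T.node (T.path x k)) ≠ 0)
    (hshrink : Tendsto (fun k => T.node (T.path x k)) atTop (𝓝 x).smallSets)
    (hfar : ∃ᶠ k in atTop, 3 * ε < dist (⨍ y in T.node (T.path x k), g y ∂μ) (g x)) :
    (∃ l, x ∈ T.node l ∧
      ENNReal.ofReal ε * μ (T.node l) < ∫⁻ y in T.node l, ‖g y - φ y‖ₑ ∂μ) ∨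
    ENNReal.ofReal ε ≤ ‖g x - φ x‖ₑ := by
  by_contra! h
  obtain ⟨hnode, hxφ⟩ := h
  have hφx : ‖g x - φ x‖ ≤ ε :=
    ((ENNReal.ofReal_lt_ofReal_iff hε).1 (by rwa [ofReal_norm])).le
  have hφlim := tendsto_setAverage_of_continuousAt hshrink (fun k => hT _) hμx hφ.continuousAt hφi
  refine hfar ((Metric.tendsto_nhds.1 hφlim ε hε).mono fun k hk => ?_)
  set s := T.node (T.path x k)
  have hgφ : ‖⨍ y in s, (g y - φ y) ∂μ‖ ≤ ε :=
    norm_setAverage_le_of_setLIntegral_le hε.le (hnode _ (T.mem_node_path hx k))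
  have hsplit : ⨍ y in s, g y ∂μ = ⨍ y in s, (g y - φ y) ∂μ + ⨍ y in s, φ y ∂μ := by
    simp only [setAverage_eq, ← smul_add]
    rw [← integral_add (f := fun y => g y - φ y) (hg.sub hφi).integrableOn hφi.integrableOn]
    simp only [sub_add_cancel]
  rw [not_lt, dist_eq_norm, hsplit]
  rw [dist_eq_norm] at hk
  calc ‖⨍ y in s, (g y - φ y) ∂μ + ⨍ y in s, φ y ∂μ - g x‖
      = ‖⨍ y in s, (g y - φ y) ∂μ + (⨍ y in s, φ y ∂μ - φ x) - (g x - φ x)‖ := by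
        congr 1; abel
    _ ≤ ‖⨍ y in s, (g y - φ y) ∂μ‖ + ‖⨍ y in s, φ y ∂μ - φ x‖ + ‖g x - φ x‖ :=
        (norm_sub_le _ _).trans (add_le_add (norm_add_le _ _) le_rfl)
    _ ≤ 3 * ε := by linarith

variable [BorelSpace α] [μ.WeaklyRegular]

theorem measure_setOf_frequently_far_eq_zero (hT : ∀ l, MeasurableSet (T.node l))
    (hg : Integrable g μ) {ε : ℝ} (hε : 0 < ε) :
    μ {x | x ∈ T.node [] ∧ (∀ k, μ (T.node (T.path x k)) ≠ 0) ∧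
      Tendsto (fun k => T.node (T.path x k)) atTop (𝓝 x).smallSets ∧
      ∃ᶠ k in atTop, 3 * ε < dist (⨍ y in T.node (T.path x k), g y ∂μ) (g x)} = 0 := by
  refine (mul_eq_zero.1 (?_ : ENNReal.ofReal ε * μ _ = 0)).resolve_left
    (ENNReal.ofReal_eq_zero.not.2 hε.not_ge)
  refine le_antisymm (ENNReal.le_of_forall_pos_le_add fun δ hδ _ => ?_) zero_le
  obtain ⟨φ, hφ, hφi⟩ := hg.exists_boundedContinuous_lintegral_sub_le (ε := δ / 2)
    (by simpa using hδ.ne')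
  set E₁ := ⋃ l ∈ {l | ENNReal.ofReal ε * μ (T.node l) <
    ∫⁻ y in T.node l, ‖g y - φ y‖ₑ ∂μ}, T.node l
  set E₂ := {x | ENNReal.ofReal ε ≤ ‖g x - φ x‖ₑ}
  calc _ ≤ ENNReal.ofReal ε * μ E₁ + ENNReal.ofReal ε * μ E₂ := by
        rw [← mul_add]
        gcongr
        refine (measure_mono fun x hx => ?_).trans (measure_union_le _ _)
        obtain ⟨hx, hμx, hshrink, hfar⟩ := hx
        exact (T.exists_node_lt_setLIntegral_or_le_enorm hT hg φ.continuous hφi hε hx hμx hshrink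
          hfar).imp (fun ⟨l, hxl, hl⟩ => mem_biUnion (x := l) hl hxl) id
    _ ≤ ∫⁻ y, ‖g y - φ y‖ₑ ∂μ + ∫⁻ y, ‖g y - φ y‖ₑ ∂μ :=
        add_le_add (T.mul_measure_biUnion_le_lintegral hT μ _ _)
          (mul_meas_ge_le_lintegral₀ (hg.sub hφi).aestronglyMeasurable.enorm _)
    _ ≤ δ / 2 + δ / 2 := add_le_add hφ hφ
    _ = 0 + δ := by rw [ENNReal.add_halves, zero_add]

theorem ae_tendsto_setAverage (hT : ∀ l, MeasurableSet (T.node l)) (hg : Integrable g μ) :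
    ∀ᵐ x ∂μ, x ∈ T.node [] → Tendsto (fun k => T.node (T.path x k)) atTop (𝓝 x).smallSets →
      Tendsto (fun k => ⨍ y in T.node (T.path x k), g y ∂μ) atTop (𝓝 (g x)) := by
  have hnear := fun m : ℕ => measure_eq_zero_iff_ae_notMem.1
    (T.measure_setOf_frequently_far_eq_zero hT hg (Nat.one_div_pos_of_nat (n := m)))
  filter_upwards [ae_all_iff.2 hnear, ae_forall_mem_imp_measure_ne_zero T.node]
    with x hnear hpos hx hshrink
  refine Metric.tendsto_nhds.2 fun δ hδ => ?_
  obtain ⟨m, hm⟩ := exists_nat_one_div_lt (by positivity : 0 < δ / 3)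
  have := hnear m
  simp only [not_and, not_frequently, not_lt] at this
  filter_upwards [this hx (fun k => hpos _ (T.mem_node_path hx k)) hshrink] with k hk
  linarith

end PartitionTree

section Rect

variable {n : ℕ} {a b x : Fin n → ℝ} {i : Fin n} {p : ℝ}

theorem measurableSet_rect (a b : Fin n → ℝ) : MeasurableSet (rect a b) :=
  MeasurableSet.univ_pi fun _ => measurableSet_Ico

theorem mem_rect : x ∈ rect a b ↔ ∀ j, a j ≤ x j ∧ x j < b j := by
  simp [rect]

theorem mem_rect_iff_and_ne (i : Fin n) : x ∈ rect a b ↔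
    (a i ≤ x i ∧ x i < b i) ∧ ∀ j, j ≠ i → a j ≤ x j ∧ x j < b j := by
  rw [mem_rect, ← update_eq_self i b, forall_update_iff b (fun j c => a j ≤ x j ∧ x j < c)]
  simp

theorem rect_update_union (hp : p ∈ uIcc (a i) (b i)) :
    rect a (update b i p) ∪ rect (update a i p) b = rect a b := by
  ext x
  simp only [mem_union, mem_rect_iff_and_ne i, update_self]
  have : ∀ j, j ≠ i → update b i p j = b j ∧ update a i p j = a j := fun j hj =>
    ⟨update_of_ne hj _ _, update_of_ne hj _ _⟩
  rw [mem_uIcc] at hp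
  constructor
  · rintro (⟨h, h'⟩ | ⟨h, h'⟩)
    · refine ⟨⟨h.1, ?_⟩, fun j hj => (this j hj).1 ▸ h' j hj⟩
      rcases hp with hp | hp <;> linarith
    · refine ⟨⟨?_, h.2⟩, fun j hj => (this j hj).2 ▸ h' j hj⟩
      rcases hp with hp | hp <;> linarith
  · rintro ⟨h, h'⟩
    rcases lt_or_ge (x i) p with hx | hx
    · exact Or.inl ⟨⟨h.1, hx⟩, fun j hj => (this j hj).1.symm ▸ h' j hj⟩
    · exact Or.inr ⟨⟨hx, h.2⟩, fun j hj => (this j hj).2.symm ▸ h' j hj⟩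

theorem disjoint_rect_update : Disjoint (rect a (update b i p)) (rect (update a i p) b) :=
  Set.disjoint_left.2 fun x h₁ h₂ => by
    have := (mem_rect.1 h₁ i).2
    have := (mem_rect.1 h₂ i).1
    simp only [update_self] at *
    linarith

theorem rect_update_snd (hp : p ≤ b i) : rect a (update b i p) = rect a b ∩ {x | x i < p} := by
  ext x
  simp only [mem_inter_iff, mem_ofPred_eq, mem_rect_iff_and_ne i, update_self]
  constructor
  · rintro ⟨h, h'⟩
    exact ⟨⟨⟨h.1, h.2.trans_le hp⟩, fun j hj => update_of_ne hj p b ▸ h' j hj⟩, h.2⟩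
  · rintro ⟨⟨h, h'⟩, hx⟩
    exact ⟨⟨h.1, hx⟩, fun j hj => (update_of_ne hj p b).symm ▸ h' j hj⟩

theorem rect_update_fst (hp : a i ≤ p) : rect (update a i p) b = rect a b \ {x | x i < p} := by
  ext x
  simp only [Set.mem_sdiff, mem_ofPred_eq, not_lt, mem_rect_iff_and_ne i, update_self]
  constructor
  · rintro ⟨h, h'⟩
    exact ⟨⟨⟨hp.trans h.1, h.2⟩, fun j hj => update_of_ne hj p a ▸ h' j hj⟩, h.1⟩
  · rintro ⟨⟨h, h'⟩, hx⟩
    exact ⟨⟨hx, h.2⟩, fun j hj => (update_of_ne hj p a).symm ▸ h' j hj⟩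

theorem lt_of_mem_rect (hx : x ∈ rect a b) (j : Fin n) : a j < b j :=
  (mem_rect.1 hx j).1.trans_lt (mem_rect.1 hx j).2

theorem rect_subset_closedBall {r : ℝ} (hr : 0 ≤ r) (hx : x ∈ rect a b)
    (h : ∀ j, b j - a j ≤ r) : rect a b ⊆ Metric.closedBall x r := fun y hy => by
  refine (dist_pi_le_iff hr).2 fun j => ?_
  have := mem_rect.1 hx j
  have := mem_rect.1 hy j
  rw [Real.dist_eq, abs_sub_le_iff]
  constructor <;> linarith [h j]

theorem tendsto_rect_smallSets {a b : ℕ → Fin n → ℝ} (hx : ∀ k, x ∈ rect (a k) (b k))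
    (hw : ∀ j, Tendsto (fun k => b k j - a k j) atTop (𝓝 0)) :
    Tendsto (fun k => rect (a k) (b k)) atTop (𝓝 x).smallSets := by
  refine Metric.nhds_basis_closedBall.smallSets.tendsto_right_iff.2 fun ε hε => ?_
  filter_upwards [eventually_all.2 fun j => (hw j).eventually (ge_mem_nhds hε)] with k hk
  exact rect_subset_closedBall hε.le (hx k) hk

theorem volume_setOf_apply_eq (i : Fin n) (c : ℝ) : volume {x : Fin n → ℝ | x i = c} = 0 := by
  rw [volume_pi]
  exact Measure.pi_hyperplane (fun _ : Fin n => (volume : Measure ℝ)) i c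

end Rect

namespace RisingSun

variable {n : ℕ}

abbrev Box (n : ℕ) := (Fin n → ℝ) × (Fin n → ℝ)

def width (R : Box n) (j : Fin n) : ℝ := R.2 j - R.1 j

def cutBox (R : Box n) (i : Fin n) (p : ℝ) : Bool → Box n
  | false => (R.1, update R.2 i p)
  | true => (update R.1 i p, R.2)

theorem width_cutBox_le {R : Box n} {i : Fin n} {p : ℝ} (hp : p ∈ Icc (R.1 i) (R.2 i))
    (b : Bool) (j : Fin n) : width (cutBox R i p b) j ≤ width R j := by
  rcases eq_or_ne j i with rfl | hj
  · cases b <;> simp only [width, cutBox, update_self] <;> linarith [hp.1, hp.2]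
  · cases b <;> simp [width, cutBox, update_of_ne hj]

variable (μ : Measure (Fin n → ℝ)) (g : (Fin n → ℝ) → ℝ)

/-- A piece of zero integral is never cut again, so only the other pieces need to be narrower. -/
def IsGoodCut (R : Box n) (i : Fin n) (p : ℝ) : Prop :=
  p ∈ Icc (R.1 i) (R.2 i) ∧ ∀ b,
    ∫ x in rect (cutBox R i p b).1 (cutBox R i p b).2, g x ∂μ ≤ 0 ∧
    (∫ x in rect (cutBox R i p b).1 (cutBox R i p b).2, g x ∂μ = 0 ∨
      width (cutBox R i p b) i ≤ 2 / 3 * width R i)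

variable {μ g}

theorem exists_isGoodCut (hμ : μ ≪ volume) (hg : Integrable g μ) {R : Box n}
    {i : Fin n} (hR : R.1 i ≤ R.2 i) (hint : ∫ x in rect R.1 R.2, g x ∂μ ≤ 0) :
    ∃ p, IsGoodCut μ g R i p := by
  have hmeas : ∀ p, MeasurableSet {x : Fin n → ℝ | x i < p} := fun p =>
    measurableSet_lt (measurable_pi_apply i) measurable_const
  set F := fun p => ∫ x in {x | x i < p}, g x ∂μ.restrict (rect R.1 R.2)
  have hF : Continuous F := continuous_setIntegral_setOf_lt (measurable_pi_apply i)
    (fun c => Measure.restrict_le_self.absolutelyContinuous.trans hμ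
      (volume_setOf_apply_eq i c)) hg.restrict
  have hF_eq : ∀ p, F p = ∫ x in rect R.1 R.2 ∩ {x | x i < p}, g x ∂μ := fun p => by
    simp only [F]
    rw [Measure.restrict_restrict (hmeas p), inter_comm]
  have hlower : ∀ p ≤ R.2 i, ∫ x in rect R.1 (update R.2 i p), g x ∂μ = F p := fun p hp => by
    rw [rect_update_snd hp, hF_eq]
  have hupper : ∀ p, R.1 i ≤ p →
      ∫ x in rect (update R.1 i p) R.2, g x ∂μ = ∫ x in rect R.1 R.2, g x ∂μ - F p :=
    fun p hp => by
      rw [rect_update_fst hp, hF_eq, eq_sub_iff_add_eq']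
      exact integral_inter_add_sdiff (hmeas p) hg.integrableOn
  have hFa : F (R.1 i) = 0 := by
    have : rect R.1 (update R.2 i (R.1 i)) = ∅ :=
      eq_empty_of_forall_notMem fun x hx => by simpa using lt_of_mem_rect hx i
    rw [← hlower _ hR, this, Measure.restrict_empty, integral_zero_measure]
  have hFb : F (R.2 i) = ∫ x in rect R.1 R.2, g x ∂μ := by
    rw [← hlower _ le_rfl, update_eq_self]
  obtain ⟨p, hp, hFp, hFp', hl, hu⟩ := exists_cut_of_continuousOn hR hF.continuousOn hFa
    (hFb ▸ hint)
  refine ⟨p, hp, fun b => ?_⟩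
  cases b
  · simp only [cutBox, width, update_self, hlower p hp.2]
    exact ⟨hFp', hl⟩
  · simp only [cutBox, width, update_self, hupper p hp.1]
    rw [← hFb, sub_eq_zero, eq_comm]
    exact ⟨by linarith, hu⟩

variable (μ g)

open Classical in
/-- The fallback `R.2 i`, used only for inactive boxes, still cuts `R` into two pieces that
partition it (the upper one is empty). -/
noncomputable def cutPoint (R : Box n) (i : Fin n) : ℝ :=
  if h : ∃ p, IsGoodCut μ g R i p then h.choose else R.2 i

theorem cutPoint_mem_uIcc (R : Box n) (i : Fin n) : cutPoint μ g R i ∈ uIcc (R.1 i) (R.2 i) := by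
  unfold cutPoint
  split_ifs with h
  · exact Icc_subset_uIcc h.choose_spec.1
  · exact right_mem_uIcc

def Active (R : Box n) : Prop := μ (rect R.1 R.2) ≠ 0 ∧ ∫ x in rect R.1 R.2, g x ∂μ < 0

variable {μ g}

theorem isGoodCut_cutPoint (hμ : μ ≪ volume) (hg : Integrable g μ)
    {R : Box n} (hR : Active μ g R) (i : Fin n) : IsGoodCut μ g R i (cutPoint μ g R i) := by
  obtain ⟨x, hx⟩ := nonempty_of_measure_ne_zero hR.1
  have h : ∃ p, IsGoodCut μ g R i p := exists_isGoodCut hμ hg (lt_of_mem_rect hx i).le hR.2.le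
  rw [cutPoint, dif_pos h]
  exact h.choose_spec

variable (μ g) [NeZero n]

noncomputable def box (R₀ : Box n) : List Bool → Box n
  | [] => R₀
  | b :: l => cutBox (box R₀ l) (Fin.ofNat n l.length)
    (cutPoint μ g (box R₀ l) (Fin.ofNat n l.length)) b

noncomputable def rectTree (R₀ : Box n) : PartitionTree (Fin n → ℝ) where
  node l := rect (box μ g R₀ l).1 (box μ g R₀ l).2
  node_false_union_node_true l :=
    rect_update_union (a := (box μ g R₀ l).1) (b := (box μ g R₀ l).2) (cutPoint_mem_uIcc μ g _ _)
  disjoint_node_false_node_true l :=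
    disjoint_rect_update (a := (box μ g R₀ l).1) (b := (box μ g R₀ l).2)

def IsSelected (R₀ : Box n) (l : List Bool) : Prop :=
  μ ((rectTree μ g R₀).node l) ≠ 0 ∧ ∫ x in (rectTree μ g R₀).node l, g x ∂μ = 0 ∧
    ∀ l', l' <:+ l → l' ≠ l → Active μ g (box μ g R₀ l')

variable {μ g}

theorem box_path_succ (R₀ : Box n) (x : Fin n → ℝ) (k : ℕ) : ∃ b,
    box μ g R₀ ((rectTree μ g R₀).path x (k + 1)) =
      cutBox (box μ g R₀ ((rectTree μ g R₀).path x k)) (Fin.ofNat n k)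
        (cutPoint μ g (box μ g R₀ ((rectTree μ g R₀).path x k)) (Fin.ofNat n k)) b := by
  obtain ⟨b, hb⟩ := (rectTree μ g R₀).path_succ x k
  exact ⟨b, by rw [hb, box, PartitionTree.length_path]⟩

theorem tendsto_width_box_path (hμ : μ ≪ volume) (hg : Integrable g μ)
    {R₀ : Box n} {x : Fin n → ℝ}
    (hact : ∀ k, Active μ g (box μ g R₀ ((rectTree μ g R₀).path x k))) (j : Fin n) :
    Tendsto (fun k => width (box μ g R₀ ((rectTree μ g R₀).path x k)) j) atTop (𝓝 0) := by
  have hgood := fun k => isGoodCut_cutPoint hμ hg (hact k) (Fin.ofNat n k)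
  refine tendsto_zero_of_antitone_of_frequently_le_mul (c := 2 / 3) (by norm_num)
    (fun k => ?_) (antitone_nat_of_succ_le fun k => ?_) ?_
  · obtain ⟨y, hy⟩ := nonempty_of_measure_ne_zero (hact k).1
    exact sub_nonneg.2 (lt_of_mem_rect hy j).le
  · obtain ⟨b, hb⟩ := box_path_succ (μ := μ) (g := g) R₀ x k
    rw [hb]
    exact width_cutBox_le (hgood k).1 b j
  · refine (Nat.frequently_modEq (NeZero.ne n) j).mono fun k hk => ?_
    obtain rfl : Fin.ofNat n k = j := Fin.ext (by rw [Fin.val_ofNat, hk, Nat.mod_eq_of_lt j.2])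
    obtain ⟨b, hb⟩ := box_path_succ (μ := μ) (g := g) R₀ x k
    have hnext := hact (k + 1)
    rw [hb] at hnext ⊢
    exact ((hgood k).2 b).2.resolve_left hnext.2.ne

theorem pairwiseDisjoint_isSelected (R₀ : Box n) :
    {l | IsSelected μ g R₀ l}.PairwiseDisjoint (rectTree μ g R₀).node := fun l₁ h₁ l₂ h₂ hne =>
  (rectTree μ g R₀).disjoint_node_of_not_isSuffix (fun h => (h₂.2.2 l₁ h hne).2.ne h₁.2.1)
    (fun h => (h₁.2.2 l₂ h hne.symm).2.ne h₂.2.1)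

theorem active_box_path (hμ : μ ≪ volume) (hg : Integrable g μ)
    {R₀ : Box n} (hroot : ∫ x in rect R₀.1 R₀.2, g x ∂μ ≤ 0) {x : Fin n → ℝ}
    (hx : x ∈ rect R₀.1 R₀.2)
    (hpos : ∀ l, x ∈ (rectTree μ g R₀).node l → μ ((rectTree μ g R₀).node l) ≠ 0)
    (hsel : ∀ l, IsSelected μ g R₀ l → x ∉ (rectTree μ g R₀).node l) (k : ℕ) :
    Active μ g (box μ g R₀ ((rectTree μ g R₀).path x k)) := by
  set T := rectTree μ g R₀
  induction k using Nat.strong_induction_on with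
  | _ k ih =>
  have hxk : x ∈ T.node (T.path x k) := T.mem_node_path hx k
  have hint : ∫ y in rect (box μ g R₀ (T.path x k)).1 (box μ g R₀ (T.path x k)).2, g y ∂μ ≤ 0 := by
    cases k with
    | zero => exact hroot
    | succ k =>
      obtain ⟨b, hb⟩ := box_path_succ (μ := μ) (g := g) R₀ x k
      rw [hb]
      exact ((isGoodCut_cutPoint hμ hg (ih k k.lt_succ_self) _).2 b).1
  refine ⟨hpos _ hxk, hint.lt_of_ne fun h0 => hsel _ ⟨hpos _ hxk, h0, fun l' hl' hne => ?_⟩ hxk⟩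
  have hl'k : l'.length < k := by
    refine (hl'.length_le.trans_eq (T.length_path x k)).lt_of_ne fun h => hne ?_
    exact hl'.eq_of_length (h.trans (T.length_path x k).symm)
  rw [T.eq_path_of_mem_node (T.node_subset_of_isSuffix hl' hxk)]
  exact ih _ hl'k

theorem ae_nonpos_of_forall_isSelected_notMem [IsFiniteMeasure μ] (hμ : μ ≪ volume)
    (hg : Integrable g μ) {R₀ : Box n} (hroot : ∫ x in rect R₀.1 R₀.2, g x ∂μ ≤ 0) :
    ∀ᵐ x ∂μ, x ∈ rect R₀.1 R₀.2 →
      (∀ l, IsSelected μ g R₀ l → x ∉ (rectTree μ g R₀).node l) → g x ≤ 0 := by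
  set T := rectTree μ g R₀
  filter_upwards [T.ae_tendsto_setAverage (fun l => measurableSet_rect _ _) hg,
    ae_forall_mem_imp_measure_ne_zero T.node] with x hlim hpos hx hsel
  have hact := active_box_path hμ hg hroot hx hpos hsel
  refine le_of_tendsto' (hlim hx (tendsto_rect_smallSets (T.mem_node_path hx)
    (tendsto_width_box_path hμ hg hact))) fun k => ?_
  rw [setAverage_eq, smul_eq_mul]
  exact mul_nonpos_of_nonneg_of_nonpos (inv_nonneg.2 measureReal_nonneg) (hact k).2.le

end RisingSun

open RisingSun

theorem multidim_rising_sun_lemma_general {n : ℕ}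
    (μ : Measure (Fin n → ℝ)) [IsFiniteMeasure μ] (hμ : μ ≪ volume)
    (a₀ b₀ : Fin n → ℝ)
    (f : (Fin n → ℝ) → ℝ) (hf : Integrable f μ) (A : ℝ)
    (hA : ⨍ x in rect a₀ b₀, f x ∂μ ≤ A) :
    ∃ (c d : ℕ → Fin n → ℝ) (N : Set ℕ),
      (∀ j ∈ N, rect (c j) (d j) ⊆ rect a₀ b₀) ∧
      (N.PairwiseDisjoint fun j => rect (c j) (d j)) ∧
      (∀ j ∈ N, ⨍ x in rect (c j) (d j), f x ∂μ = A) ∧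
      (∀ᵐ x ∂μ, x ∈ rect a₀ b₀ \ ⋃ j ∈ N, rect (c j) (d j) → f x ≤ A) := by
  rcases eq_zero_or_neZero n with rfl | _
  · exact ⟨0, 0, ∅, by simp, by simp, by simp,
      (ae_le_of_setAverage_le_of_subsingleton hA).mono fun x h hx => h hx.1⟩
  set g := fun x => f x - A
  have hg : Integrable g μ := hf.sub (integrable_const A)
  have hroot : ∫ x in rect a₀ b₀, g x ∂μ ≤ 0 := by
    rw [setIntegral_sub_const_eq hf.integrableOn]
    exact mul_nonpos_of_nonneg_of_nonpos measureReal_nonneg (sub_nonpos.2 hA)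
  set T := rectTree μ g (a₀, b₀)
  obtain ⟨e⟩ : Nonempty (ℕ ≃ List Bool) := nonempty_equiv_of_countable
  refine ⟨fun j => (box μ g (a₀, b₀) (e j)).1, fun j => (box μ g (a₀, b₀) (e j)).2,
    e ⁻¹' {l | IsSelected μ g (a₀, b₀) l},
    fun j _ => T.node_subset_of_isSuffix List.nil_suffix,
    fun j₁ h₁ j₂ h₂ hne => pairwiseDisjoint_isSelected _ h₁ h₂ (e.injective.ne hne),
    fun j hj => ?_, ?_⟩
  · have h := hj.2.1
    rw [setIntegral_sub_const_eq hf.integrableOn, mul_eq_zero, sub_eq_zero] at h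
    exact h.resolve_left ((measureReal_ne_zero_iff (measure_ne_top _ _)).2 hj.1)
  filter_upwards [ae_nonpos_of_forall_isSelected_notMem (R₀ := (a₀, b₀)) hμ hg hroot]
    with x hx ⟨hxI, hxN⟩
  have hgx := hx hxI fun l hl hxl =>
    hxN (mem_biUnion (x := e.symm l) (by simpa using hl) (by rw [e.apply_symm_apply]; exact hxl))
  simpa [g, sub_nonpos] using hgx

/-- The multidimensional Riesz "rising sun" lemma (Korenovskyy–Lerner–Stokolos):
for a finite Borel measure `μ ≪ volume` on a rectangle `I₀` and `f ∈ L¹(μ)` with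
`μ`-mean value over `I₀` at most `A`, there exist pairwise disjoint subrectangles
`I_j ⊆ I₀` with `μ`-mean value of `f` over each `I_j` equal to `A`, and
`f ≤ A` at `μ`-almost every point of `I₀` off their union. -/
theorem multidim_rising_sun_lemma {n : ℕ}
    (μ : Measure (Fin n → ℝ)) [IsFiniteMeasure μ] (hμ : μ ≪ volume)
    (a₀ b₀ : Fin n → ℝ) (hI₀ : ∀ i, a₀ i < b₀ i) (hμI₀ : μ (rect a₀ b₀) ≠ 0)
    (f : (Fin n → ℝ) → ℝ) (hf : Integrable f μ) (A : ℝ)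
    (hA : ⨍ x in rect a₀ b₀, f x ∂μ ≤ A) :
    ∃ (c d : ℕ → Fin n → ℝ) (N : Set ℕ),
      (∀ j ∈ N, rect (c j) (d j) ⊆ rect a₀ b₀) ∧
      (N.PairwiseDisjoint fun j => rect (c j) (d j)) ∧
      (∀ j ∈ N, ⨍ x in rect (c j) (d j), f x ∂μ = A) ∧
      (∀ᵐ x ∂μ, x ∈ rect a₀ b₀ \ ⋃ j ∈ N, rect (c j) (d j) → f x ≤ A) :=
  multidim_rising_sun_lemma_general μ hμ a₀ b₀ f hf A hA
end

section
/- There exists a function $f$ on the unit square $Q_0 = [0,1]^2$ and a constant $A$ with $\frac{1}{|Q_0|}\int_{Q_0} f \le A$ such that no finite or countable collection of pairwise disjoint subcubes (squares) $Q_j \subset Q_0$ satisfies both: $\frac{1}{|Q_j|}\int_{Q_j} f = A$ for all $j$, and $f(x) \le A$ for almost every $x \in Q_0 \setminus \bigcup_j Q_j$. Concretely, $f = 1 - \chi_{[1/2,1]^2}$ and $A = 7/8$ provide such an example. -/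
/-!
Write `S = [1/2, 1]²`. On a square `Q ⊆ [0,1]²` the mean of `f = 1 - χ_S` is `7/8` exactly when
`|Q ∩ S| = |Q| / 8`. Since `f = 1 > 7/8` off `S`, each of the two corner boxes
`(0, 1/16) × (15/16, 1)` and `(15/16, 1) × (0, 1/16)` must meet a square of the family.
A square of the family reaching into the strip `{x < 1/16}` (or `{y < 1/16}`) must contain the
centre `(1/2, 1/2)`: if it lay above (or beside) the centre, matching the proportion `1/8` would force its
side to exceed `1/2`. By disjointness both corners then meet the same square, which is too large:
`|Q ∩ S| > (7/16)² > 1/8 ≥ |Q| / 8`.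
-/

open MeasureTheory Set

/-- An axis-parallel square in `ℝ²` with lower-left corner `p` and side `h`. -/
def square (p : ℝ × ℝ) (h : ℝ) : Set (ℝ × ℝ) :=
  Set.Ico p.1 (p.1 + h) ×ˢ Set.Ico p.2 (p.2 + h)

theorem setAverage_one_sub_indicator {α : Type*} [MeasurableSpace α] {μ : Measure α}
    {s t : Set α} (hs : 0 < μ.real s) (ht : MeasurableSet t) :
    ⨍ x in s, (1 - t.indicator 1 x) ∂μ = 1 - μ.real (s ∩ t) / μ.real s := by
  have hone : IntegrableOn (1 : α → ℝ) s μ :=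
    integrableOn_const (ENNReal.toReal_pos_iff.1 hs).2.ne
  have hsub : ∫ x in s, (1 - t.indicator 1 x) ∂μ =
      ∫ x in s, (1 : ℝ) ∂μ - ∫ x in s, t.indicator 1 x ∂μ :=
    integral_sub hone (hone.indicator ht)
  rw [setAverage_eq, hsub, setIntegral_const, integral_indicator_one ht,
    measureReal_restrict_apply ht, inter_comm, smul_eq_mul, smul_eq_mul, mul_one]
  field_simp

theorem volume_real_Ico_inter_Icc (a b c d : ℝ) :
    volume.real (Ico a b ∩ Icc c d) = max (min b d - max a c) 0 := by
  rw [measureReal_congr ((Ico_ae_eq_Icc (μ := volume)).inter (ae_eq_refl (Icc c d))),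
    Icc_inter_Icc, Real.volume_real_Icc]

/-- The length of `[a, a + h) ∩ [1/2, 1]`. -/
noncomputable def overlapUpperHalf (a h : ℝ) : ℝ := max (min (a + h) 1 - max a (1 / 2)) 0

theorem volume_real_square_inter_upperQuarter (p : ℝ × ℝ) (h : ℝ) :
    volume.real (square p h ∩ Icc (1 / 2) 1 ×ˢ Icc (1 / 2) 1) =
      overlapUpperHalf p.1 h * overlapUpperHalf p.2 h := by
  rw [square, prod_inter_prod, Measure.volume_eq_prod, measureReal_prod_prod,
    volume_real_Ico_inter_Icc, volume_real_Ico_inter_Icc, overlapUpperHalf, overlapUpperHalf]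

theorem volume_real_square (p : ℝ × ℝ) {h : ℝ} (h0 : 0 ≤ h) :
    volume.real (square p h) = h * h := by
  rw [square, Measure.volume_eq_prod, measureReal_prod_prod,
    Real.volume_real_Ico_of_le (by linarith), Real.volume_real_Ico_of_le (by linarith)]
  ring

theorem setAverage_square_eq_seven_eighths_iff {p : ℝ × ℝ} {h : ℝ} (h0 : 0 < h) :
    ⨍ x in square p h, ((1 : ℝ) - (Icc ((1 : ℝ) / 2) 1 ×ˢ Icc ((1 : ℝ) / 2) 1).indicator 1 x)
        = 7 / 8 ↔
      overlapUpperHalf p.1 h * overlapUpperHalf p.2 h = h * h / 8 := by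
  have hvol := volume_real_square p h0.le
  rw [setAverage_one_sub_indicator (by rw [hvol]; positivity)
    (measurableSet_Icc.prod measurableSet_Icc), hvol, volume_real_square_inter_upperQuarter]
  constructor <;> intro H
  · field_simp at H
    linarith
  · field_simp
    linarith

theorem half_lt_add_of_overlapUpperHalf_pos {a h : ℝ} (hpos : 0 < overlapUpperHalf a h) :
    1 / 2 < a + h := by
  simp only [overlapUpperHalf, lt_max_iff, lt_irrefl, or_false, sub_pos, max_lt_iff,
    lt_min_iff] at hpos
  linarith [hpos.2.1]

theorem overlapUpperHalf_le (a h : ℝ) : overlapUpperHalf a h ≤ max (a + h - 1 / 2) 0 := by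
  unfold overlapUpperHalf
  gcongr
  · exact min_le_left _ _
  · exact le_max_right _ _

theorem le_half_of_overlapUpperHalf_mul_eq {a b h : ℝ} (h0 : 0 < h) (hb : b + h ≤ 1)
    (ha : a < 1 / 16) (hm : overlapUpperHalf a h * overlapUpperHalf b h = h * h / 8) :
    b ≤ 1 / 2 := by
  by_contra! hb'
  have hob : overlapUpperHalf b h = h := by
    rw [overlapUpperHalf, min_eq_left hb, max_eq_left hb'.le, add_sub_cancel_left,
      max_eq_left h0.le]
  have hoa : overlapUpperHalf a h = h / 8 := by
    rw [hob] at hm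
    field_simp at hm ⊢
    nlinarith
  have hah := half_lt_add_of_overlapUpperHalf_pos (a := a) (h := h) (by rw [hoa]; positivity)
  have hle := overlapUpperHalf_le a h
  rw [hoa, max_eq_left (by linarith)] at hle
  -- `7h/8 ≥ 1/2 - a > 7/16` gives `h > 1/2`, while `1/2 < b ≤ 1 - h`
  linarith

theorem seven_sixteenths_lt_overlapUpperHalf {a h : ℝ} (ha : a < 1 / 16)
    (ha' : 15 / 16 < a + h) : 7 / 16 < overlapUpperHalf a h := by
  rw [overlapUpperHalf, max_eq_right (by linarith : a ≤ 1 / 2)]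
  refine lt_max_of_lt_left ?_
  rcases min_choice (a + h) 1 with hmin | hmin <;> rw [hmin] <;> linarith

theorem bounds_of_square_subset {p : ℝ × ℝ} {h : ℝ} (h0 : 0 < h)
    (hQ : square p h ⊆ Icc (0 : ℝ) 1 ×ˢ Icc (0 : ℝ) 1) :
    (0 ≤ p.1 ∧ p.1 + h ≤ 1) ∧ (0 ≤ p.2 ∧ p.2 + h ≤ 1) := by
  have hcl : Icc p.1 (p.1 + h) ×ˢ Icc p.2 (p.2 + h) ⊆ Icc (0 : ℝ) 1 ×ˢ Icc (0 : ℝ) 1 := by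
    rw [← closure_Ico (by linarith), ← closure_Ico (by linarith), ← closure_prod_eq]
    exact (isClosed_Icc.prod isClosed_Icc).closure_subset_iff.2 hQ
  rwa [prod_subset_prod_iff' ((nonempty_Icc.2 (by linarith)).prod (nonempty_Icc.2 (by linarith))),
    Icc_subset_Icc_iff (by linarith), Icc_subset_Icc_iff (by linarith)] at hcl

theorem center_mem_square {p : ℝ × ℝ} {h : ℝ} (h0 : 0 < h)
    (hQ : square p h ⊆ Icc (0 : ℝ) 1 ×ˢ Icc (0 : ℝ) 1)
    (hm : overlapUpperHalf p.1 h * overlapUpperHalf p.2 h = h * h / 8)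
    {x : ℝ × ℝ} (hx : x ∈ square p h) (hx' : x.1 < 1 / 16 ∨ x.2 < 1 / 16) :
    ((1 : ℝ) / 2, (1 : ℝ) / 2) ∈ square p h := by
  obtain ⟨⟨-, ha⟩, ⟨-, hb⟩⟩ := bounds_of_square_subset h0 hQ
  have hpos : 0 < overlapUpperHalf p.1 h * overlapUpperHalf p.2 h := by rw [hm]; positivity
  have hpos₁ : 0 < overlapUpperHalf p.1 h := pos_of_mul_pos_left hpos (le_max_right _ _)
  have hpos₂ : 0 < overlapUpperHalf p.2 h := pos_of_mul_pos_right hpos (le_max_right _ _)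
  have hlow : p.1 ≤ 1 / 2 ∧ p.2 ≤ 1 / 2 := by
    obtain ⟨⟨hx₁, -⟩, ⟨hx₂, -⟩⟩ := hx
    rcases hx' with hx' | hx'
    · exact ⟨by linarith, le_half_of_overlapUpperHalf_mul_eq h0 hb (by linarith) hm⟩
    · exact ⟨le_half_of_overlapUpperHalf_mul_eq (a := p.2) h0 ha (by linarith)
        (by rw [mul_comm, hm]), by linarith⟩
  exact ⟨⟨hlow.1, half_lt_add_of_overlapUpperHalf_pos hpos₁⟩,
    ⟨hlow.2, half_lt_add_of_overlapUpperHalf_pos hpos₂⟩⟩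

theorem overlapUpperHalf_mul_ne_of_mem_corners {p : ℝ × ℝ} {h : ℝ} (h0 : 0 < h)
    (hQ : square p h ⊆ Icc (0 : ℝ) 1 ×ˢ Icc (0 : ℝ) 1) {x y : ℝ × ℝ}
    (hx : x ∈ square p h) (hx₁ : x.1 < 1 / 16) (hx₂ : 15 / 16 < x.2)
    (hy : y ∈ square p h) (hy₁ : 15 / 16 < y.1) (hy₂ : y.2 < 1 / 16) :
    overlapUpperHalf p.1 h * overlapUpperHalf p.2 h ≠ h * h / 8 := by
  obtain ⟨⟨ha₀, ha⟩, -⟩ := bounds_of_square_subset h0 hQ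
  obtain ⟨⟨hxa, -⟩, ⟨-, hxb⟩⟩ := hx
  obtain ⟨⟨-, hya⟩, ⟨hyb, -⟩⟩ := hy
  have h₁ := seven_sixteenths_lt_overlapUpperHalf (a := p.1) (h := h) (by linarith) (by linarith)
  have h₂ := seven_sixteenths_lt_overlapUpperHalf (a := p.2) (h := h) (by linarith) (by linarith)
  nlinarith

theorem exists_mem_of_ae_one_sub_indicator_le {α : Type*} [MeasurableSpace α] {μ : Measure α}
    {Q U T V : Set α} {c : ℝ} (hc : c < 1)
    (hae : ∀ᵐ x ∂μ, x ∈ Q \ U → 1 - T.indicator 1 x ≤ c)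
    (hV : V ⊆ Q \ T) (hV₀ : μ V ≠ 0) : ∃ x ∈ V, x ∈ U := by
  by_contra! hVU
  refine hV₀ (measure_mono_null (fun x hxV => ?_) (ae_iff.1 hae))
  simp only [mem_ofPred_eq, Classical.not_imp, not_le]
  refine ⟨⟨(hV hxV).1, hVU x hxV⟩, ?_⟩
  rwa [indicator_of_notMem (hV hxV).2, sub_zero]

/-- The rising sun lemma with squares in place of intervals fails in dimension 2:
for `f = 1 - χ_{[1/2,1]²}` on `Q₀ = [0,1]²` and `A = 7/8` one has
`⨍_{Q₀} f ≤ A`, yet no finite or countable family of pairwise disjoint subsquares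
of `Q₀` has mean value of `f` exactly `A` on each square and `f ≤ A` almost
everywhere off the union. -/
theorem rising_sun_fails_for_squares :
    ∃ (f : ℝ × ℝ → ℝ) (A : ℝ),
      f = (fun x => 1 - (Icc ((1:ℝ)/2) 1 ×ˢ Icc ((1:ℝ)/2) 1).indicator 1 x) ∧
      A = 7 / 8 ∧
      (⨍ x in Icc (0:ℝ) 1 ×ˢ Icc (0:ℝ) 1, f x) ≤ A ∧
      ¬ ∃ (p : ℕ → ℝ × ℝ) (h : ℕ → ℝ) (N : Set ℕ),
          (∀ j ∈ N, 0 < h j ∧ square (p j) (h j) ⊆ Icc (0:ℝ) 1 ×ˢ Icc (0:ℝ) 1) ∧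
          (N.PairwiseDisjoint fun j => square (p j) (h j)) ∧
          (∀ j ∈ N, ⨍ x in square (p j) (h j), f x = A) ∧
          (∀ᵐ x, x ∈ (Icc (0:ℝ) 1 ×ˢ Icc (0:ℝ) 1) \ ⋃ j ∈ N, square (p j) (h j) →
            f x ≤ A) := by
  refine ⟨_, 7 / 8, rfl, rfl, ?_, ?_⟩
  · have hQ₀ : volume.real (Icc (0 : ℝ) 1 ×ˢ Icc (0 : ℝ) 1) = 1 := by
      rw [Measure.volume_eq_prod, measureReal_prod_prod, Real.volume_real_Icc]
      norm_num
    have hS : volume.real (Icc ((1 : ℝ) / 2) 1 ×ˢ Icc ((1 : ℝ) / 2) 1) = 1 / 4 := by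
      rw [Measure.volume_eq_prod, measureReal_prod_prod, Real.volume_real_Icc]
      norm_num
    rw [setAverage_one_sub_indicator (by rw [hQ₀]; norm_num)
      (measurableSet_Icc.prod measurableSet_Icc),
      inter_eq_right.2 (prod_mono (Icc_subset_Icc (by norm_num) le_rfl)
        (Icc_subset_Icc (by norm_num) le_rfl)), hQ₀, hS]
    norm_num
  · rintro ⟨p, h, N, hQ, hdisj, hmean, hae⟩
    have hm : ∀ j ∈ N,
        overlapUpperHalf (p j).1 (h j) * overlapUpperHalf (p j).2 (h j) = h j * h j / 8 :=
      fun j hj => (setAverage_square_eq_seven_eighths_iff (hQ j hj).1).1 (hmean j hj)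
    obtain ⟨x, ⟨⟨-, hx₁⟩, ⟨hx₂, -⟩⟩, hxU⟩ := exists_mem_of_ae_one_sub_indicator_le
      (by norm_num) hae (V := Ioo 0 (1 / 16) ×ˢ Ioo (15 / 16) 1)
      (fun _ ⟨⟨h₁, _⟩, ⟨_, h₄⟩⟩ => ⟨⟨⟨h₁.le, by linarith⟩, ⟨by linarith, h₄.le⟩⟩,
        fun ⟨⟨_, _⟩, _⟩ => by linarith⟩)
      (by norm_num [Measure.volume_eq_prod, Measure.prod_prod])
    obtain ⟨y, ⟨⟨hy₁, -⟩, ⟨-, hy₂⟩⟩, hyU⟩ := exists_mem_of_ae_one_sub_indicator_le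
      (by norm_num) hae (V := Ioo (15 / 16) 1 ×ˢ Ioo 0 (1 / 16))
      (fun _ ⟨⟨_, h₂⟩, ⟨h₃, _⟩⟩ => ⟨⟨⟨by linarith, h₂.le⟩, ⟨h₃.le, by linarith⟩⟩,
        fun ⟨_, ⟨_, _⟩⟩ => by linarith⟩)
      (by norm_num [Measure.volume_eq_prod, Measure.prod_prod])
    obtain ⟨i, hi, hxi⟩ := mem_iUnion₂.1 hxU
    obtain ⟨j, hj, hyj⟩ := mem_iUnion₂.1 hyU
    obtain rfl : i = j := hdisj.elim hi hj <| not_disjoint_iff.2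
      ⟨_, center_mem_square (hQ i hi).1 (hQ i hi).2 (hm i hi) hxi (Or.inl hx₁),
        center_mem_square (hQ j hj).1 (hQ j hj).2 (hm j hj) hyj (Or.inr hy₂)⟩
    exact overlapUpperHalf_mul_ne_of_mem_corners (hQ i hi).1 (hQ i hi).2 hxi hx₁ hx₂ hyj hy₁ hy₂
      (hm i hi)
end

section
/- Let $f \in L^1([a,b])$ and $A \in \mathbb{R}$ with $\frac{1}{b-a}\int_a^b f \le A$. Define $F(x) = \int_a^x (f(t) - A)\,dt$. Then the set $U = \{x \in (a,b) : \exists y \in (x, b], F(y) > F(x)\}$ is open, and it is a countable disjoint union of intervals $(a_j, b_j)$ with $F(a_j) = F(b_j)$ (equivalently $\frac{1}{b_j - a_j}\int_{a_j}^{b_j} f = A$) except possibly when $a_j = a$, and for almost every $x \notin U$ one has $f(x) \le A$. -/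
open MeasureTheory Set Topology

/-!
The shadow set `U` is open because `F` is continuous. On a component `(c, d)` of `U`, take
`x ∈ (c, d)` and a maximum point `s` of `F` on `[x, d]`: if `s < d`, then `s` is in shadow, and
the point `y > s` that it sees must lie beyond `d` (by maximality), so `F d ≤ F s < F y` puts `d`
in shadow too, which it is not. Hence `F ≤ F d` on `(c, d)`, so `F c ≤ F d`, while `c ∉ U`
gives `F d ≤ F c` as soon as `c > a`. Off `U`, `F` does not increase to the right, and by the
Lebesgue differentiation theorem `F' = f - A` almost everywhere, so `f ≤ A` almost everywhere
off `U`.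
-/

section Components

variable {α : Type*} [ConditionallyCompleteLinearOrder α] [TopologicalSpace α] [OrderTopology α]
  [DenselyOrdered α]

theorem IsOpen.eq_Ioo_csInf_csSup [NoMinOrder α] [NoMaxOrder α] {s : Set α}
    (ho : IsOpen s) (hc : IsConnected s) (hb : BddBelow s) (ha : BddAbove s) :
    s = Ioo (sInf s) (sSup s) :=
  ((ho.subset_interior_iff.2 (subset_Icc_csInf_csSup hb ha)).trans interior_Icc.subset).antisymm
    (hc.Ioo_csInf_csSup_subset hb ha)

theorem notMem_of_connectedComponentIn_eq_Ioo {U : Set α} {x c d : α}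
    (hx : x ∈ U) (h : connectedComponentIn U x = Ioo c d) : c ∉ U ∧ d ∉ U := by
  have hxI : x ∈ Ioo c d := h ▸ mem_connectedComponentIn hx
  have hIoo : Ioo c d ⊆ U := h ▸ connectedComponentIn_subset U x
  constructor
  · intro hc
    have hIco : Ico c d ⊆ Ioo c d := h ▸ isPreconnected_Ico.subset_connectedComponentIn
      (Ioo_subset_Ico_self hxI) (Ioo_insert_left (hxI.1.trans hxI.2) ▸ insert_subset hc hIoo)
    exact (hIco (left_mem_Ico.2 (hxI.1.trans hxI.2))).1.false
  · intro hd
    have hIoc : Ioc c d ⊆ Ioo c d := h ▸ isPreconnected_Ioc.subset_connectedComponentIn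
      (Ioo_subset_Ioc_self hxI) (Ioo_insert_right (hxI.1.trans hxI.2) ▸ insert_subset hd hIoo)
    exact (hIoc (right_mem_Ioc.2 (hxI.1.trans hxI.2))).2.false

end Components

theorem Set.Countable.exists_bijOn_nat {α : Type*} [Nonempty α] {s : Set α} (hs : s.Countable) :
    ∃ (N : Set ℕ) (K : ℕ → α), BijOn K N s := by
  obtain ⟨f, hf⟩ := countable_iff_exists_injOn.1 hs
  exact ⟨f '' s, Function.invFunOn f s, hf.bijOn_image.symm hf.bijOn_image.invOn_invFunOn.symm⟩

theorem IsOpen.exists_eq_biUnion_Ioo_of_isBounded {U : Set ℝ} (hU : IsOpen U)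
    (hb : Bornology.IsBounded U) :
    ∃ (c d : ℕ → ℝ) (N : Set ℕ), (∀ j ∈ N, c j < d j ∧ c j ∉ U ∧ d j ∉ U) ∧
      N.PairwiseDisjoint (fun j => Ioo (c j) (d j)) ∧ U = ⋃ j ∈ N, Ioo (c j) (d j) := by
  set 𝒞 := connectedComponentIn U '' U
  have hdisj : 𝒞.PairwiseDisjoint id := by
    rintro _ ⟨x, -, rfl⟩ _ ⟨y, -, rfl⟩ hne
    refine disjoint_left.2 fun z hzx hzy => hne ?_
    rw [connectedComponentIn_eq hzx, connectedComponentIn_eq hzy]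
  have hcount : 𝒞.Countable := hdisj.countable_of_isOpen
    (by rintro _ ⟨x, -, rfl⟩; exact hU.connectedComponentIn)
    (by rintro _ ⟨x, hx, rfl⟩; exact ⟨x, mem_connectedComponentIn hx⟩)
  obtain ⟨N, K, hK⟩ := hcount.exists_bijOn_nat
  have hKIoo : ∀ j ∈ N,
      K j = Ioo (sInf (K j)) (sSup (K j)) ∧ sInf (K j) ∉ U ∧ sSup (K j) ∉ U := by
    intro j hj
    obtain ⟨x, hx, hxK⟩ := hK.mapsTo hj
    have hxb := hb.subset (connectedComponentIn_subset U x)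
    have hIoo : K j = Ioo (sInf (K j)) (sSup (K j)) :=
      hxK ▸ hU.connectedComponentIn.eq_Ioo_csInf_csSup
        (isConnected_connectedComponentIn_iff.2 hx) hxb.bddBelow hxb.bddAbove
    exact ⟨hIoo, notMem_of_connectedComponentIn_eq_Ioo hx (hxK ▸ hIoo)⟩
  refine ⟨fun j => sInf (K j), fun j => sSup (K j), N,
    fun j hj => ⟨?_, (hKIoo j hj).2⟩, ?_, ?_⟩
  · obtain ⟨x, hx, hxK⟩ := hK.mapsTo hj
    have := (hKIoo j hj).1 ▸ hxK ▸ mem_connectedComponentIn hx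
    exact this.1.trans this.2
  · exact ((hK.injOn.pairwiseDisjoint_image (f := id)).1 (hK.image_eq ▸ hdisj)).mono_on
      fun j hj => (hKIoo j hj).1.ge
  · calc U = ⋃ x ∈ U, connectedComponentIn U x :=
          (iUnion₂_subset fun x _ => connectedComponentIn_subset U x).antisymm'
            fun x hx => mem_biUnion hx (mem_connectedComponentIn hx)
      _ = ⋃ C ∈ 𝒞, C := by rw [biUnion_image]
      _ = ⋃ j ∈ N, K j := by rw [← hK.image_eq, biUnion_image]
      _ = ⋃ j ∈ N, Ioo (sInf (K j)) (sSup (K j)) := iUnion₂_congr fun j hj => (hKIoo j hj).1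

def risingSunShadow (F : ℝ → ℝ) (a b : ℝ) : Set ℝ :=
  {x ∈ Ioo a b | ∃ y ∈ Ioc x b, F x < F y}

section RisingSun

variable {F : ℝ → ℝ} {a b : ℝ}

theorem risingSunShadow_subset_Ioo : risingSunShadow F a b ⊆ Ioo a b := sep_subset _ _

theorem isOpen_risingSunShadow (hF : ContinuousOn F (Ioo a b)) :
    IsOpen (risingSunShadow F a b) := by
  rw [isOpen_iff_mem_nhds]
  rintro x ⟨hx, y, hy, hxy⟩
  have hFx : ContinuousAt F x := hF.continuousAt (Ioo_mem_nhds hx.1 hx.2)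
  filter_upwards [Ioo_mem_nhds hx.1 hx.2, Iio_mem_nhds hy.1,
    hFx.preimage_mem_nhds (Iio_mem_nhds hxy)] with z hz hzy hFz
  exact ⟨hz, y, ⟨hzy, hy.2⟩, hFz⟩

theorem le_of_notMem_risingSunShadow {x y : ℝ} (hx : x ∈ Ioo a b)
    (hxU : x ∉ risingSunShadow F a b) (hy : y ∈ Ioc x b) : F y ≤ F x :=
  not_lt.1 fun h => hxU ⟨hx, y, hy, h⟩

theorem le_right_of_Ioo_subset_risingSunShadow {c d x : ℝ} (hF : ContinuousOn F (Icc c d))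
    (hac : a ≤ c) (hsub : Ioo c d ⊆ risingSunShadow F a b)
    (hd : d ∉ risingSunShadow F a b) (hx : x ∈ Ioo c d) : F x ≤ F d := by
  obtain ⟨s, hs, hmax⟩ := isCompact_Icc.exists_isMaxOn (nonempty_Icc.2 hx.2.le)
    (hF.mono (Icc_subset_Icc_left hx.1.le))
  rw [isMaxOn_iff] at hmax
  suffices s = d from this ▸ hmax x ⟨le_rfl, hx.2.le⟩
  by_contra hsd
  obtain ⟨-, y, hy, hsy⟩ := hsub ⟨hx.1.trans_le hs.1, hs.2.lt_of_ne hsd⟩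
  rcases le_or_gt y d with hyd | hdy
  · exact (hmax y ⟨hs.1.trans hy.1.le, hyd⟩).not_gt hsy
  · exact hd ⟨⟨hac.trans_lt (hx.1.trans hx.2), hdy.trans_le hy.2⟩, y, ⟨hdy, hy.2⟩,
      (hmax d ⟨hx.2.le, le_rfl⟩).trans_lt hsy⟩

theorem le_of_Ioo_subset_risingSunShadow {c d : ℝ} (hF : ContinuousOn F (Icc c d))
    (hac : a ≤ c) (hcd : c < d) (hsub : Ioo c d ⊆ risingSunShadow F a b)
    (hd : d ∉ risingSunShadow F a b) : F c ≤ F d := by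
  have hclosed : IsClosed (Icc c d ∩ F ⁻¹' Iic (F d)) :=
    hF.preimage_isClosed_of_isClosed isClosed_Icc isClosed_Iic
  have hIcc : closure (Ioo c d) ⊆ Icc c d ∩ F ⁻¹' Iic (F d) :=
    hclosed.closure_subset_iff.2 fun x hx =>
      ⟨Ioo_subset_Icc_self hx, le_right_of_Ioo_subset_risingSunShadow hF hac hsub hd hx⟩
  exact (hIcc (closure_Ioo hcd.ne ▸ left_mem_Icc.2 hcd.le)).2

theorem eq_of_Ioo_subset_risingSunShadow {c d : ℝ} (hF : ContinuousOn F (Icc c d))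
    (hac : a < c) (hcd : c < d) (hdb : d ≤ b) (hsub : Ioo c d ⊆ risingSunShadow F a b)
    (hc : c ∉ risingSunShadow F a b) (hd : d ∉ risingSunShadow F a b) : F c = F d :=
  (le_of_Ioo_subset_risingSunShadow hF hac.le hcd hsub hd).antisymm
    (le_of_notMem_risingSunShadow ⟨hac, hcd.trans_le hdb⟩ hc ⟨hcd, hdb⟩)

theorem HasDerivAt.nonpos_of_eventually_le_right {x F' : ℝ} (hF : HasDerivAt F F' x)
    (h : ∀ᶠ y in 𝓝[>] x, F y ≤ F x) : F' ≤ 0 := by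
  refine le_of_tendsto (hasDerivAt_iff_tendsto_slope_left_right.1 hF).2 ?_
  filter_upwards [h, self_mem_nhdsWithin] with y hy hxy
  rw [slope_def_field]
  exact div_nonpos_of_nonpos_of_nonneg (sub_nonpos.2 hy) (sub_nonneg.2 (le_of_lt hxy))

theorem ae_nonpos_of_notMem_risingSunShadow {g : ℝ → ℝ}
    (hg : IntervalIntegrable g volume a b) :
    ∀ᵐ x, x ∈ Icc a b \ risingSunShadow (fun x => ∫ t in a..x, g t) a b → g x ≤ 0 := by
  filter_upwards [hg.ae_hasDerivAt_integral,
    (Ioo_ae_eq_Icc (μ := volume) (a := a) (b := b)).symm.le]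
    with x hderiv hIoo ⟨hx, hxU⟩
  have hxIoo : x ∈ Ioo a b := hIoo hx
  refine (hderiv (Icc_subset_uIcc hx) a left_mem_uIcc).nonpos_of_eventually_le_right ?_
  filter_upwards [Ioc_mem_nhdsGT hxIoo.2] with y hy
  exact le_of_notMem_risingSunShadow hxIoo hxU hy

end RisingSun

theorem riesz_rising_sun_shadow_general (a b : ℝ) (hab : a < b)
    (f : ℝ → ℝ) (hf : IntegrableOn f (Icc a b)) (A : ℝ)
    (F : ℝ → ℝ) (hF : F = fun x => ∫ t in a..x, (f t - A))
    (U : Set ℝ) (hU : U = {x ∈ Ioo a b | ∃ y ∈ Ioc x b, F y > F x}) :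
    IsOpen U ∧
    ∃ (c d : ℕ → ℝ) (N : Set ℕ),
      (∀ j ∈ N, a ≤ c j ∧ c j < d j ∧ d j ≤ b) ∧
      (N.PairwiseDisjoint fun j => Ioo (c j) (d j)) ∧
      U = ⋃ j ∈ N, Ioo (c j) (d j) ∧
      (∀ j ∈ N, c j ≠ a → F (c j) = F (d j)) ∧
      (∀ᵐ x, x ∈ Icc a b \ U → f x ≤ A) := by
  have hint : IntegrableOn (fun t => f t - A) (Icc a b) :=
    hf.sub (integrableOn_const measure_Icc_lt_top.ne)
  have hg : IntervalIntegrable (fun t => f t - A) volume a b :=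
    (intervalIntegrable_iff_integrableOn_Icc_of_le hab.le).2 hint
  have hFc : ContinuousOn F (Icc a b) := by
    rw [hF, ← uIcc_of_le hab.le]
    exact intervalIntegral.continuousOn_primitive_interval (by rwa [uIcc_of_le hab.le])
  replace hU : U = risingSunShadow F a b := hU
  subst hU
  have hUo := isOpen_risingSunShadow (hFc.mono Ioo_subset_Icc_self)
  obtain ⟨c, d, N, hcd, hdisj, hUN⟩ := hUo.exists_eq_biUnion_Ioo_of_isBounded
    (Metric.isBounded_Ioo a b |>.subset risingSunShadow_subset_Ioo)
  have hsub : ∀ j ∈ N, Ioo (c j) (d j) ⊆ risingSunShadow F a b := fun j hj =>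
    hUN ▸ subset_biUnion_of_mem (u := fun j => Ioo (c j) (d j)) hj
  have hbounds : ∀ j ∈ N, a ≤ c j ∧ d j ≤ b := fun j hj =>
    (Ioo_subset_Ioo_iff (hcd j hj).1).1 ((hsub j hj).trans risingSunShadow_subset_Ioo)
  refine ⟨hUo, c, d, N, fun j hj => ⟨(hbounds j hj).1, (hcd j hj).1, (hbounds j hj).2⟩,
    hdisj, hUN, fun j hj hca => ?_, ?_⟩
  · obtain ⟨hac, hdb⟩ := hbounds j hj
    exact eq_of_Ioo_subset_risingSunShadow (hFc.mono (Icc_subset_Icc hac hdb)) (hac.lt_of_ne' hca)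
      (hcd j hj).1 hdb (hsub j hj) (hcd j hj).2.1 (hcd j hj).2.2
  · subst hF
    filter_upwards [ae_nonpos_of_notMem_risingSunShadow hg] with x hx hxU
    exact sub_nonpos.1 (hx hxU)

/-- The classical "rising sun" formulation of Riesz's lemma: with
`F x = ∫_a^x (f - A)`, the shadow set
`U = {x ∈ (a,b) : ∃ y ∈ (x, b], F y > F x}` is open, it decomposes into
countably many pairwise disjoint open intervals `(aⱼ, bⱼ)` with `F aⱼ = F bⱼ`
except possibly when `aⱼ = a`, and `f ≤ A` almost everywhere off `U`. -/
theorem riesz_rising_sun_shadow (a b : ℝ) (hab : a < b)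
    (f : ℝ → ℝ) (hf : IntegrableOn f (Icc a b)) (A : ℝ)
    (hA : ⨍ x in Icc a b, f x ≤ A)
    (F : ℝ → ℝ) (hF : F = fun x => ∫ t in a..x, (f t - A))
    (U : Set ℝ) (hU : U = {x ∈ Ioo a b | ∃ y ∈ Ioc x b, F y > F x}) :
    IsOpen U ∧
    ∃ (c d : ℕ → ℝ) (N : Set ℕ),
      (∀ j ∈ N, a ≤ c j ∧ c j < d j ∧ d j ≤ b) ∧
      (N.PairwiseDisjoint fun j => Ioo (c j) (d j)) ∧
      U = ⋃ j ∈ N, Ioo (c j) (d j) ∧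
      (∀ j ∈ N, c j ≠ a → F (c j) = F (d j)) ∧
      (∀ᵐ x, x ∈ Icc a b \ U → f x ≤ A) :=
  riesz_rising_sun_shadow_general a b hab f hf A F hF U hU
end
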